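/- For monotone bead distributions A, B of n beads on [μ,∞): Aₖ ≤ Bₖ for all k if and only if for every ε > 0 the distribution B(ε) defined by Bₖ(ε) = Bₖ + 2ᵏε can be obtained from A by finitely many admissible bead slides. Consequently, the topological closure of the slide relation ⪯ in ℬₙ(μ) × ℬₙ(μ) equals the componentwise order ≤. -/
import Mathlib


/-- `A` is a monotone bead distribution of `n` beads on `[μ,∞)`.
We use the convention `A 0 = μ`, so the beads are `A 1 < ⋯ < A n` with
`μ ≤ A 1` and nondecreasing successive gaps. -/
def BeadMono (n : ℕ) (μ : ℝ) (A : ℕ → ℝ) : Prop :=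
  A 0 = μ ∧ A 0 ≤ A 1 ∧
  (∀ k, 2 ≤ k → k ≤ n → A (k - 1) < A k) ∧
  (∀ k, 2 ≤ k → k ≤ n → A (k - 1) - A (k - 2) ≤ A k - A (k - 1))

/-- One admissible bead slide: move the `k`-th bead to the right by `δ ≥ 0`
so that the result is again monotone. -/
def BeadSlide (n : ℕ) (μ : ℝ) (A B : ℕ → ℝ) : Prop :=
  ∃ k δ, 1 ≤ k ∧ k ≤ n ∧ 0 ≤ δ ∧
    B = Function.update A k (A k + δ) ∧ BeadMono n μ B

/-- `BeadReach n μ A B`: `B` is obtained from `A` by finitely many admissible slides. -/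
def BeadReach (n : ℕ) (μ : ℝ) : (ℕ → ℝ) → (ℕ → ℝ) → Prop :=
  Relation.ReflTransGen (BeadSlide n μ)

private lemma slide_le {n : ℕ} {μ : ℝ} {X Y : ℕ → ℝ} (h : BeadSlide n μ X Y) (k : ℕ) :
    X k ≤ Y k := by
  obtain ⟨j, δ, -, -, hδ, rfl, -⟩ := h
  rcases eq_or_ne k j with rfl | hne
  · rw [Function.update_self]; linarith
  · rw [Function.update_of_ne hne]

private lemma reach_le {n : ℕ} {μ : ℝ} {X Y : ℕ → ℝ} (h : BeadReach n μ X Y) (k : ℕ) :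
    X k ≤ Y k := by
  induction h with
  | refl => exact le_rfl
  | tail _ hs ih => exact ih.trans (slide_le hs k)

private lemma slide_zero {n : ℕ} {μ : ℝ} {X Y : ℕ → ℝ} (h : BeadSlide n μ X Y) :
    Y 0 = X 0 := by
  obtain ⟨j, δ, hj, -, -, rfl, -⟩ := h
  exact Function.update_of_ne (by omega) _ _

private lemma reach_zero {n : ℕ} {μ : ℝ} {X Y : ℕ → ℝ} (h : BeadReach n μ X Y) :
    Y 0 = X 0 := by
  induction h with
  | refl => rfl
  | tail _ hs ih => exact (slide_zero hs).trans ih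

private lemma zmono {n : ℕ} {μ : ℝ} {X Y : ℕ → ℝ}
    (hX : BeadMono n μ X) (hY : BeadMono n μ Y)
    (hle : ∀ k, X k ≤ Y k)
    (hjun : ∀ k, 1 ≤ k → k + 1 ≤ n → Y k - X (k - 1) ≤ Y (k + 1) - Y k)
    (m : ℕ) :
    BeadMono n μ (fun j => if m ≤ j then Y j else X j) := by
  have hZ0 : (if m ≤ 0 then Y 0 else X 0) = μ := by
    split
    · exact hY.1
    · exact hX.1
  refine ⟨hZ0, ?_, ?_, ?_⟩
  · show (if m ≤ 0 then Y 0 else X 0) ≤ (if m ≤ 1 then Y 1 else X 1)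
    rw [hZ0]
    split
    · rw [← hY.1]; exact hY.2.1
    · rw [← hX.1]; exact hX.2.1
  · intro k hk2 hkn
    obtain ⟨j, rfl⟩ : ∃ j, k = j + 2 := ⟨k - 2, by omega⟩
    show (if m ≤ j + 1 then Y (j+1) else X (j+1)) < (if m ≤ j + 2 then Y (j+2) else X (j+2))
    have hsX : X (j+1) < X (j+2) := hX.2.2.1 (j+2) (by omega) hkn
    have hsY : Y (j+1) < Y (j+2) := hY.2.2.1 (j+2) (by omega) hkn
    rcases le_or_gt m (j+1) with h1 | h1
    · rw [if_pos h1, if_pos (by omega)]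
      exact hsY
    · rcases le_or_gt m (j+2) with h2 | h2
      · rw [if_neg (by omega), if_pos h2]
        exact lt_of_lt_of_le hsX (hle _)
      · rw [if_neg (by omega), if_neg (by omega)]
        exact hsX
  · intro k hk2 hkn
    obtain ⟨j, rfl⟩ : ∃ j, k = j + 2 := ⟨k - 2, by omega⟩
    show (if m ≤ j + 1 then Y (j+1) else X (j+1)) - (if m ≤ j then Y j else X j) ≤
      (if m ≤ j + 2 then Y (j+2) else X (j+2)) - (if m ≤ j + 1 then Y (j+1) else X (j+1))
    have hcX : X (j+1) - X j ≤ X (j+2) - X (j+1) := hX.2.2.2 (j+2) (by omega) hkn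
    have hcY : Y (j+1) - Y j ≤ Y (j+2) - Y (j+1) := hY.2.2.2 (j+2) (by omega) hkn
    rcases le_or_gt m j with h0 | h0
    · rw [if_pos h0, if_pos (by omega), if_pos (by omega)]
      exact hcY
    · rcases le_or_gt m (j+1) with h1 | h1
      · rw [if_pos h1, if_neg (show ¬ m ≤ j by omega), if_pos (show m ≤ j + 2 by omega)]
        exact hjun (j+1) (by omega) (by omega)
      · rcases le_or_gt m (j+2) with h2 | h2
        · rw [if_neg (by omega), if_neg (by omega), if_pos h2]
          have := hle (j+2)
          linarith
        · rw [if_neg (by omega), if_neg (by omega), if_neg (by omega)]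
          exact hcX

private lemma onePass {n : ℕ} {μ : ℝ} {X Y : ℕ → ℝ}
    (hX : BeadMono n μ X) (hY : BeadMono n μ Y)
    (hle : ∀ k, X k ≤ Y k)
    (heq : ∀ k, n < k → Y k = X k)
    (hjun : ∀ k, 1 ≤ k → k + 1 ≤ n → Y k - X (k - 1) ≤ Y (k + 1) - Y k) :
    BeadReach n μ X Y := by
  have hstep : ∀ m, 1 ≤ m → m ≤ n →
      BeadSlide n μ (fun j => if m + 1 ≤ j then Y j else X j)
        (fun j => if m ≤ j then Y j else X j) := by
    intro m h1 h2
    refine ⟨m, Y m - X m, h1, h2, by linarith [hle m], ?_, zmono hX hY hle hjun m⟩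
    funext j
    rcases eq_or_ne j m with rfl | hne
    · rw [Function.update_self]
      show (if j ≤ j then Y j else X j) = (if j + 1 ≤ j then Y j else X j) + (Y j - X j)
      rw [if_pos le_rfl, if_neg (by omega)]
      ring
    · rw [Function.update_of_ne hne]
      show (if m ≤ j then Y j else X j) = (if m + 1 ≤ j then Y j else X j)
      rcases le_or_gt m j with hj | hj
      · rw [if_pos hj, if_pos (by omega)]
      · rw [if_neg (by omega), if_neg (by omega)]
  have key : ∀ m, BeadReach n μ (fun j => if m + 1 ≤ j then Y j else X j)
      (fun j => if 1 ≤ j then Y j else X j) := by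
    intro m
    induction m with
    | zero => exact Relation.ReflTransGen.refl
    | succ m ih =>
      rcases le_or_gt (m + 1) n with h | h
      · exact Relation.ReflTransGen.head (hstep (m+1) (by omega) h) ih
      · have heq2 : (fun j => if m + 2 ≤ j then Y j else X j)
            = (fun j => if m + 1 ≤ j then Y j else X j) := by
          funext j
          rcases le_or_gt (m+1) j with hj | hj
          · rcases le_or_gt (m+2) j with hj2 | hj2
            · rw [if_pos hj, if_pos hj2]
            · have : j = m + 1 := by omega
              subst this
              rw [if_neg (by omega), if_pos hj, heq (m+1) (by omega)]
          · rw [if_neg (by omega), if_neg (by omega)]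
        rw [heq2]
        exact ih
  have hZX : (fun j => if n + 1 ≤ j then Y j else X j) = X := by
    funext j
    rcases le_or_gt (n+1) j with hj | hj
    · rw [if_pos hj, heq j (by omega)]
    · rw [if_neg (by omega)]
  have hZY : (fun j => if 1 ≤ j then Y j else X j) = Y := by
    funext j
    rcases le_or_gt 1 j with hj | hj
    · rw [if_pos hj]
    · have : j = 0 := by omega
      subst this
      rw [if_neg (by omega)]
      exact hX.1.trans hY.1.symm
  have hk := key n
  rw [hZX, hZY] at hk
  exact hk

private def Tcfg (n : ℕ) (μ : ℝ) (B : ℕ → ℝ) (ε : ℝ) : ℕ → ℝ :=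
  fun k => if k = 0 then μ else if k ≤ n then B k + 2 ^ k * ε else B k

private lemma Tcfg_zero {n : ℕ} {μ : ℝ} {B : ℕ → ℝ} {ε : ℝ} : Tcfg n μ B ε 0 = μ := by
  simp [Tcfg]

private lemma Tcfg_eq {n : ℕ} {μ : ℝ} {B : ℕ → ℝ} {ε : ℝ} {k : ℕ}
    (h1 : 1 ≤ k) (h2 : k ≤ n) : Tcfg n μ B ε k = B k + 2 ^ k * ε := by
  unfold Tcfg
  rw [if_neg (by omega), if_pos h2]

private lemma Tcfg_strict {n : ℕ} {μ : ℝ} {B : ℕ → ℝ} {ε : ℝ}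
    (hB : BeadMono n μ B) (hε : 0 < ε) :
    ∀ k, 2 ≤ k → k ≤ n → Tcfg n μ B ε (k - 1) < Tcfg n μ B ε k := by
  intro k hk2 hkn
  obtain ⟨m, rfl⟩ : ∃ m, k = m + 2 := ⟨k - 2, by omega⟩
  show Tcfg n μ B ε (m+1) < Tcfg n μ B ε (m+2)
  rw [Tcfg_eq (by omega) (by omega), Tcfg_eq (by omega) hkn]
  have hbs : B (m+1) < B (m+2) := hB.2.2.1 (m+2) (by omega) hkn
  have hp : (2:ℝ) ^ (m+1) ≤ 2 ^ (m+2) := by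
    apply pow_le_pow_right₀ (by norm_num) (by omega)
  nlinarith

private lemma Tcfg_conv2 {n : ℕ} {μ : ℝ} {B : ℕ → ℝ} {ε : ℝ}
    (hB : BeadMono n μ B) (hε : 0 < ε) :
    ∀ k, 3 ≤ k → k ≤ n →
      Tcfg n μ B ε (k - 1) - Tcfg n μ B ε (k - 2) + 2 * ε ≤
        Tcfg n μ B ε k - Tcfg n μ B ε (k - 1) := by
  intro k hk3 hkn
  obtain ⟨m, rfl⟩ : ∃ m, k = m + 3 := ⟨k - 3, by omega⟩
  show Tcfg n μ B ε (m+2) - Tcfg n μ B ε (m+1) + 2 * ε ≤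
    Tcfg n μ B ε (m+3) - Tcfg n μ B ε (m+2)
  rw [Tcfg_eq (by omega) (by omega), Tcfg_eq (by omega) (by omega),
    Tcfg_eq (by omega) hkn]
  have hbc : B (m+2) - B (m+1) ≤ B (m+3) - B (m+2) := hB.2.2.2 (m+3) (by omega) hkn
  have h2 : (2:ℝ) ≤ 2 ^ (m+1) := by
    calc (2:ℝ) = 2 ^ 1 := (pow_one 2).symm
    _ ≤ 2 ^ (m+1) := pow_le_pow_right₀ (by norm_num) (by omega)
  have e4 : (2:ℝ) ^ (m+2) = 2 * 2 ^ (m+1) := by ring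
  have e5 : (2:ℝ) ^ (m+3) = 4 * 2 ^ (m+1) := by ring
  rw [e4, e5]
  have h6 : 2 * ε ≤ 2 ^ (m+1) * ε := mul_le_mul_of_nonneg_right h2 hε.le
  linarith

private lemma Tcfg_conv {n : ℕ} {μ : ℝ} {B : ℕ → ℝ} {ε : ℝ}
    (hB : BeadMono n μ B) (hε : 0 < ε) :
    ∀ k, 2 ≤ k → k ≤ n →
      Tcfg n μ B ε (k - 1) - Tcfg n μ B ε (k - 2) ≤
        Tcfg n μ B ε k - Tcfg n μ B ε (k - 1) := by
  intro k hk2 hkn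
  rcases eq_or_lt_of_le hk2 with heq | hlt
  · subst heq
    show Tcfg n μ B ε 1 - Tcfg n μ B ε 0 ≤ Tcfg n μ B ε 2 - Tcfg n μ B ε 1
    rw [Tcfg_zero, Tcfg_eq (by omega) (by omega), Tcfg_eq (by omega) hkn]
    have hbc : B 1 - B 0 ≤ B 2 - B 1 := hB.2.2.2 2 le_rfl hkn
    have hB0 : B 0 = μ := hB.1
    have p1 : (2:ℝ) ^ 1 = 2 := pow_one 2
    have p2 : (2:ℝ) ^ 2 = 4 := by norm_num
    rw [p1, p2]
    linarith
  · have := Tcfg_conv2 hB hε k (by omega) hkn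
    linarith

private lemma Tcfg_mono {n : ℕ} {μ : ℝ} {B : ℕ → ℝ} {ε : ℝ}
    (hB : BeadMono n μ B) (hε : 0 < ε) : BeadMono n μ (Tcfg n μ B ε) := by
  refine ⟨Tcfg_zero, ?_, Tcfg_strict hB hε, Tcfg_conv hB hε⟩
  rw [Tcfg_zero]
  rcases le_or_gt 1 n with h | h
  · rw [Tcfg_eq le_rfl h]
    have h1 : B 0 ≤ B 1 := hB.2.1
    have h2 : (0:ℝ) < 2 ^ 1 * ε := by positivity
    have h0 : B 0 = μ := hB.1
    linarith
  · have : Tcfg n μ B ε 1 = B 1 := by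
      unfold Tcfg
      rw [if_neg (by omega), if_neg (by omega)]
    rw [this, ← hB.1]
    exact hB.2.1

/-- The intermediate configurations of the sliding algorithm. -/
private def XC (n : ℕ) (μ : ℝ) (A B : ℕ → ℝ) (ε t : ℝ) : ℕ → ℝ :=
  fun k => if 1 ≤ k ∧ k ≤ n then max (A k) (Tcfg n μ B ε k - t) else A k

private lemma reach_all {n : ℕ} {μ : ℝ} {A B : ℕ → ℝ}
    (hA : BeadMono n μ A) (hB : BeadMono n μ B)
    (hAB : ∀ k, 1 ≤ k → k ≤ n → A k ≤ B k) {ε : ℝ} (hε : 0 < ε) :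
    ∃ C : ℕ → ℝ, BeadReach n μ A C ∧ ∀ k, 1 ≤ k → k ≤ n → C k = B k + 2 ^ k * ε := by
  classical
  -- basic facts about XC
  have hX0 : ∀ t : ℝ, XC n μ A B ε t 0 = A 0 := by
    intro t; unfold XC; rw [if_neg (by omega)]
  have hXA : ∀ (t : ℝ) (k : ℕ), A k ≤ XC n μ A B ε t k := by
    intro t k; unfold XC; split
    · exact le_max_left _ _
    · exact le_rfl
  have hXhigh : ∀ (t : ℝ) (k : ℕ), n < k → XC n μ A B ε t k = A k := by
    intro t k hk; unfold XC; rw [if_neg (by omega)]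
  have hAT : ∀ k, k ≤ n → A k ≤ Tcfg n μ B ε k := by
    intro k hk
    rcases Nat.eq_zero_or_pos k with rfl | h1
    · rw [Tcfg_zero]; exact le_of_eq hA.1
    · rw [Tcfg_eq h1 hk]
      have h2 := hAB k h1 hk
      have h3 : (0:ℝ) < 2 ^ k * ε := by positivity
      linarith
  have hXT : ∀ t : ℝ, 0 ≤ t → ∀ k, k ≤ n → Tcfg n μ B ε k - t ≤ XC n μ A B ε t k := by
    intro t ht k hk
    rcases Nat.eq_zero_or_pos k with rfl | h1
    · rw [hX0, hA.1, Tcfg_zero]; linarith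
    · unfold XC; rw [if_pos ⟨h1, hk⟩]
      exact le_trans (by linarith) (le_max_right (A k) _)
  have hXcases : ∀ (t : ℝ) (k : ℕ), 1 ≤ k → k ≤ n →
      XC n μ A B ε t k = A k ∨ XC n μ A B ε t k = Tcfg n μ B ε k - t := by
    intro t k h1 h2; unfold XC; rw [if_pos ⟨h1, h2⟩]; exact max_choice _ _
  have hXmono : ∀ t t' : ℝ, t' ≤ t → ∀ k, XC n μ A B ε t k ≤ XC n μ A B ε t' k := by
    intro t t' h k; unfold XC; split
    · exact max_le_max le_rfl (by linarith)
    · exact le_rfl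
  -- each XC t is a monotone bead configuration
  have hXbead : ∀ t : ℝ, 0 ≤ t → BeadMono n μ (XC n μ A B ε t) := by
    intro t ht
    refine ⟨by rw [hX0]; exact hA.1, ?_, ?_, ?_⟩
    · rw [hX0 t]
      exact hA.2.1.trans (hXA t 1)
    · intro k hk2 hkn
      obtain ⟨m, rfl⟩ : ∃ m, k = m + 2 := ⟨k - 2, by omega⟩
      show XC n μ A B ε t (m+1) < XC n μ A B ε t (m+2)
      have hA2 : A (m+1) < A (m+2) := hA.2.2.1 (m+2) (by omega) hkn
      have hT2 : Tcfg n μ B ε (m+1) < Tcfg n μ B ε (m+2) := Tcfg_strict hB hε (m+2) (by omega) hkn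
      have hU1 := hXA t (m+2)
      have hU2 := hXT t ht (m+2) hkn
      rcases hXcases t (m+1) (by omega) (by omega) with h | h <;> rw [h] <;> linarith
    · intro k hk2 hkn
      obtain ⟨m, rfl⟩ : ∃ m, k = m + 2 := ⟨k - 2, by omega⟩
      show XC n μ A B ε t (m+1) - XC n μ A B ε t m ≤
        XC n μ A B ε t (m+2) - XC n μ A B ε t (m+1)
      rcases hXcases t (m+1) (by omega) (by omega) with h | h <;> rw [h]
      · have h1 := hXA t m
        have h2 := hXA t (m+2)
        have h3 : A (m+1) - A m ≤ A (m+2) - A (m+1) := hA.2.2.2 (m+2) (by omega) hkn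
        linarith
      · have h1 := hXT t ht m (by omega)
        have h2 := hXT t ht (m+2) hkn
        have h3 : Tcfg n μ B ε (m+1) - Tcfg n μ B ε m ≤
            Tcfg n μ B ε (m+2) - Tcfg n μ B ε (m+1) := Tcfg_conv hB hε (m+2) (by omega) hkn
        linarith
  -- one pass of the algorithm
  have hpass : ∀ t t' : ℝ, 0 ≤ t' → t' ≤ t → t - t' ≤ 2 * ε →
      BeadReach n μ (XC n μ A B ε t) (XC n μ A B ε t') := by
    intro t t' h0 h1 h2
    have ht : 0 ≤ t := le_trans h0 h1
    apply onePass (hXbead t ht) (hXbead t' h0) (hXmono t t' h1)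
    · intro k hk; rw [hXhigh t k hk, hXhigh t' k hk]
    · intro k hk1 hkn1
      rcases hXcases t' k hk1 (by omega) with h | h <;> rw [h]
      · have h3 := hXA t (k-1)
        have h4 := hXA t' (k+1)
        have h5 : A k - A (k-1) ≤ A (k+1) - A k := hA.2.2.2 (k+1) (by omega) hkn1
        linarith
      · have h4 : Tcfg n μ B ε (k+1) - t' ≤ XC n μ A B ε t' (k+1) := hXT t' h0 (k+1) hkn1
        rcases Nat.lt_or_ge k 2 with hk2 | hk2
        · have hk1' : k = 1 := by omega
          subst hk1'
          show Tcfg n μ B ε 1 - t' - XC n μ A B ε t 0 ≤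
            XC n μ A B ε t' (1+1) - (Tcfg n μ B ε 1 - t')
          have h5 : Tcfg n μ B ε 1 - Tcfg n μ B ε 0 ≤ Tcfg n μ B ε 2 - Tcfg n μ B ε 1 :=
            Tcfg_conv hB hε 2 le_rfl hkn1
          have h6 : XC n μ A B ε t 0 = μ := by rw [hX0, hA.1]
          have h7 : Tcfg n μ B ε 0 = μ := Tcfg_zero
          have h4' : Tcfg n μ B ε 2 - t' ≤ XC n μ A B ε t' 2 := h4
          linarith
        · have h5 : Tcfg n μ B ε k - Tcfg n μ B ε (k-1) + 2 * ε ≤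
              Tcfg n μ B ε (k+1) - Tcfg n μ B ε k := Tcfg_conv2 hB hε (k+1) (by omega) hkn1
          have h6 : Tcfg n μ B ε (k-1) - t ≤ XC n μ A B ε t (k-1) := hXT t ht (k-1) (by omega)
          linarith
  -- the deficit bound
  set M := ∑ k ∈ Finset.Icc 1 n, (Tcfg n μ B ε k - A k) with hM
  have hMnonneg : 0 ≤ M := Finset.sum_nonneg (fun k hk => by
    have := hAT k (Finset.mem_Icc.mp hk).2; linarith)
  have hMk : ∀ k, 1 ≤ k → k ≤ n → Tcfg n μ B ε k - A k ≤ M := by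
    intro k h1 h2
    exact Finset.single_le_sum (f := fun k => Tcfg n μ B ε k - A k)
      (fun i hi => by have := hAT i (Finset.mem_Icc.mp hi).2; linarith)
      (Finset.mem_Icc.mpr ⟨h1, h2⟩)
  obtain ⟨J, hJ⟩ := exists_nat_ge (M / (2 * ε))
  have hJ' : M - 2 * ε * (J:ℝ) ≤ 0 := by
    rw [div_le_iff₀ (by positivity)] at hJ
    nlinarith
  -- the chain of passes
  have hchain : ∀ j : ℕ, BeadReach n μ (XC n μ A B ε M)
      (XC n μ A B ε (max 0 (M - 2 * ε * (j:ℝ)))) := by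
    intro j
    induction j with
    | zero =>
      have e : max 0 (M - 2 * ε * ((0:ℕ):ℝ)) = M := by
        push_cast
        rw [mul_zero, sub_zero]
        exact max_eq_right hMnonneg
      rw [e]
      exact Relation.ReflTransGen.refl
    | succ j ih =>
      refine Relation.ReflTransGen.trans ih (hpass _ _ ?_ ?_ ?_)
      · exact le_max_left _ _
      · apply max_le_max le_rfl
        push_cast
        nlinarith
      · have hlo : M - 2 * ε * ((j+1:ℕ):ℝ) ≤ max 0 (M - 2 * ε * ((j+1:ℕ):ℝ)) :=
          le_max_right _ _
        have h0 : (0:ℝ) ≤ max 0 (M - 2 * ε * ((j+1:ℕ):ℝ)) := le_max_left _ _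
        have : max 0 (M - 2 * ε * ((j:ℕ):ℝ)) ≤ max 0 (M - 2 * ε * ((j+1:ℕ):ℝ)) + 2 * ε := by
          apply max_le
          · linarith
          · push_cast at hlo ⊢
            linarith
        linarith
  -- conclusion
  refine ⟨XC n μ A B ε (max 0 (M - 2 * ε * (J:ℝ))), ?_, ?_⟩
  · have e0 : XC n μ A B ε M = A := by
      funext k
      unfold XC
      split
      · rename_i h
        exact max_eq_left (by have := hMk k h.1 h.2; linarith)
      · rfl
    have hc := hchain J
    rw [e0] at hc
    exact hc
  · intro k h1 h2
    have eJ : max 0 (M - 2 * ε * (J:ℝ)) = 0 := max_eq_left hJ'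
    rw [eJ]
    unfold XC
    rw [if_pos ⟨h1, h2⟩, sub_zero, max_eq_right (hAT k h2), Tcfg_eq h1 h2]


/-- `A ≤ B` componentwise iff for every `ε > 0` one can slide `A`
to the perturbed configuration `B k + 2 ^ k * ε`; consequently the closure of
the slide relation on `ℬₙ(μ) × ℬₙ(μ)` equals the componentwise order. -/
theorem closure_of_slide_order (n : ℕ) (μ : ℝ) (A B : ℕ → ℝ)
    (hA : BeadMono n μ A) (hB : BeadMono n μ B) :
    ((∀ k, 1 ≤ k → k ≤ n → A k ≤ B k) ↔
      ∀ ε : ℝ, 0 < ε → ∃ C : ℕ → ℝ, BeadReach n μ A C ∧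
        ∀ k, 1 ≤ k → k ≤ n → C k = B k + 2 ^ k * ε) ∧
    ((∀ k, 1 ≤ k → k ≤ n → A k ≤ B k) ↔
      (A, B) ∈ closure {p : (ℕ → ℝ) × (ℕ → ℝ) |
        BeadMono n μ p.1 ∧ BeadMono n μ p.2 ∧
        ∃ C : ℕ → ℝ, BeadReach n μ p.1 C ∧ ∀ k, k ≤ n → C k = p.2 k}) := by
  have hrev : (∀ ε : ℝ, 0 < ε → ∃ C : ℕ → ℝ, BeadReach n μ A C ∧
      ∀ k, 1 ≤ k → k ≤ n → C k = B k + 2 ^ k * ε) →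
      ∀ k, 1 ≤ k → k ≤ n → A k ≤ B k := by
    intro h k hk1 hkn
    have key : ∀ η : ℝ, 0 < η → A k ≤ B k + η := by
      intro η hη
      obtain ⟨C, hreach, hCk⟩ := h (η / 2 ^ k) (by positivity)
      have h1 : A k ≤ C k := reach_le hreach k
      rw [hCk k hk1 hkn] at h1
      have h2 : (2:ℝ) ^ k * (η / 2 ^ k) = η := by field_simp
      rw [h2] at h1
      exact h1
    by_contra hcon
    push_neg at hcon
    have := key ((A k - B k) / 2) (by linarith)
    linarith
  constructor
  · constructor
    · intro hle ε hε
      exact reach_all hA hB hle hε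
    · exact hrev
  · constructor
    · intro hle
      have hmem : ∀ ε : ℝ, 0 < ε →
          ((A, Tcfg n μ B ε) : (ℕ → ℝ) × (ℕ → ℝ)) ∈ {p : (ℕ → ℝ) × (ℕ → ℝ) |
            BeadMono n μ p.1 ∧ BeadMono n μ p.2 ∧
            ∃ C : ℕ → ℝ, BeadReach n μ p.1 C ∧ ∀ k, k ≤ n → C k = p.2 k} := by
        intro ε hε
        obtain ⟨C, hr, hC⟩ := reach_all hA hB hle hε
        refine ⟨hA, Tcfg_mono hB hε, C, hr, ?_⟩
        intro k hk
        rcases Nat.eq_zero_or_pos k with rfl | h1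
        · rw [reach_zero hr, hA.1]
          exact (Tcfg_zero (n := n) (μ := μ) (B := B) (ε := ε)).symm
        · rw [hC k h1 hk]
          exact (Tcfg_eq h1 hk).symm
      have htend : Filter.Tendsto (fun ε : ℝ => ((A, Tcfg n μ B ε) : (ℕ → ℝ) × (ℕ → ℝ)))
          (nhdsWithin 0 (Set.Ioi 0)) (nhds (A, B)) := by
        apply Filter.Tendsto.prodMk_nhds tendsto_const_nhds
        rw [tendsto_pi_nhds]
        intro k
        rcases Nat.eq_zero_or_pos k with rfl | h1
        · have hf : (fun ε : ℝ => Tcfg n μ B ε 0) = fun _ => μ := by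
            funext ε; exact Tcfg_zero
          rw [hf, hB.1]
          exact tendsto_const_nhds
        · rcases le_or_gt k n with h2 | h2
          · have hf : (fun ε : ℝ => Tcfg n μ B ε k) = fun ε => B k + 2 ^ k * ε := by
              funext ε; exact Tcfg_eq h1 h2
            rw [hf]
            have hc : Filter.Tendsto (fun ε : ℝ => B k + 2 ^ k * ε) (nhds 0)
                (nhds (B k + 2 ^ k * 0)) :=
              (continuous_const.add (continuous_const.mul continuous_id)).tendsto 0
            simp only [mul_zero, add_zero] at hc
            exact hc.mono_left nhdsWithin_le_nhds
          · have hf : (fun ε : ℝ => Tcfg n μ B ε k) = fun _ => B k := by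
              funext ε; unfold Tcfg; rw [if_neg (by omega), if_neg (by omega)]
            rw [hf]
            exact tendsto_const_nhds
      exact mem_closure_of_tendsto htend
        (Filter.eventually_of_mem self_mem_nhdsWithin (fun ε hε => hmem ε hε))
    · intro hcl k hk1 hkn
      have hclosed : IsClosed {p : (ℕ → ℝ) × (ℕ → ℝ) | p.1 k ≤ p.2 k} :=
        isClosed_le ((continuous_apply k).comp continuous_fst)
          ((continuous_apply k).comp continuous_snd)
      have hsub : {p : (ℕ → ℝ) × (ℕ → ℝ) |
          BeadMono n μ p.1 ∧ BeadMono n μ p.2 ∧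
          ∃ C : ℕ → ℝ, BeadReach n μ p.1 C ∧ ∀ k, k ≤ n → C k = p.2 k} ⊆
          {p : (ℕ → ℝ) × (ℕ → ℝ) | p.1 k ≤ p.2 k} := by
        rintro ⟨p1, p2⟩ ⟨-, -, C, hr, hC⟩
        have h1 := reach_le hr k
        rw [hC k hkn] at h1
        exact h1
      exact closure_minimal hsub hclosed hcl
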